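/- arXiv:nlin/0505003 — 10 statements merged into one kernel-verified Lean document; each statement's English description precedes it below -/
import Mathlib

section
/- Let u : ℝ → ℝ be continuous, let λ, μ ∈ ℝ, and let R : ℝ → ℝ be twice differentiable with R(x) > 0 for all x, satisfying the Ermakov–Drach relation −(1/2)·R(x)·R''(x) + (1/4)·R'(x)² + (u(x) + λ)·R(x)² = μ² for all x ∈ ℝ. Fix x₀ ∈ ℝ and define Ψ(x) := √(R(x)) · exp(∫_{x₀}^{x} μ/R(t) dt). Then Ψ is twice differentiable and satisfies the Schrödinger equation Ψ''(x) = (u(x) + λ)·Ψ(x) for all x ∈ ℝ (Drach's quadrature formula (3.1)). -/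
/-- Drach's quadrature formula: if `R > 0` satisfies the Ermakov–Drach relation, then
`Ψ(x) = √R(x) · exp(∫_{x₀}^x μ/R)` solves the Schrödinger equation `Ψ'' = (u+λ)Ψ`. -/
theorem drach_quadrature_formula
    (u R R' R'' : ℝ → ℝ) (lam μ x₀ : ℝ)
    (hu : Continuous u)
    (hR : ∀ x, HasDerivAt R (R' x) x) (hR' : ∀ x, HasDerivAt R' (R'' x) x)
    (hRpos : ∀ x, 0 < R x)
    (hED : ∀ x, -(1/2) * R x * R'' x + (1/4) * (R' x)^2 + (u x + lam) * (R x)^2 = μ^2) :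
    ∃ Ψ' Ψ'' : ℝ → ℝ,
      (∀ x, HasDerivAt
        (fun y => Real.sqrt (R y) * Real.exp (∫ t in x₀..y, μ / R t)) (Ψ' x) x) ∧
      (∀ x, HasDerivAt Ψ' (Ψ'' x) x) ∧
      (∀ x, Ψ'' x =
        (u x + lam) * (Real.sqrt (R x) * Real.exp (∫ t in x₀..x, μ / R t))) := by
  set E : ℝ → ℝ := fun y => Real.exp (∫ t in x₀..y, μ / R t) with hEdef
  have hRcont : Continuous R := by
    have : Differentiable ℝ R := fun x => (hR x).differentiableAt
    exact this.continuous
  have hfcont : Continuous (fun t => μ / R t) :=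
    continuous_const.div hRcont (fun t => (hRpos t).ne')
  have hE : ∀ x, HasDerivAt E (E x * (μ / R x)) x := by
    intro x
    have hint : HasDerivAt (fun y => ∫ t in x₀..y, μ / R t) (μ / R x) x :=
      intervalIntegral.integral_hasDerivAt_right
        (hfcont.intervalIntegrable _ _)
        (hfcont.stronglyMeasurableAtFilter _ _)
        hfcont.continuousAt
    exact hint.exp
  have hS : ∀ x, HasDerivAt (fun y => Real.sqrt (R y)) (R' x / (2 * Real.sqrt (R x))) x := by
    intro x
    have := (Real.hasDerivAt_sqrt (hRpos x).ne').comp x (hR x)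
    refine this.congr_deriv (Eq.symm ?_)
    ring
  refine ⟨fun x => (R' x + 2 * μ) / (2 * Real.sqrt (R x)) * E x,
    fun x => (u x + lam) * (Real.sqrt (R x) * E x), ?_, ?_, fun x => rfl⟩
  · intro x
    have hs : 0 < Real.sqrt (R x) := Real.sqrt_pos.mpr (hRpos x)
    have hsq : Real.sqrt (R x) ^ 2 = R x := Real.sq_sqrt (hRpos x).le
    have := (hS x).mul (hE x)
    refine this.congr_deriv (Eq.symm ?_)
    beta_reduce
    set s := Real.sqrt (R x) with hsdef
    rw [← hsq]
    field_simp
  · intro x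
    have hs : 0 < Real.sqrt (R x) := Real.sqrt_pos.mpr (hRpos x)
    have hsq : Real.sqrt (R x) ^ 2 = R x := Real.sq_sqrt (hRpos x).le
    have hnum : HasDerivAt (fun y => R' y + 2 * μ) (R'' x) x :=
      (hR' x).add_const _
    have hden : HasDerivAt (fun y => 2 * Real.sqrt (R y)) (2 * (R' x / (2 * Real.sqrt (R x)))) x :=
      (hS x).const_mul 2
    have hdiv := (hnum.div hden (by positivity)).mul (hE x)
    refine hdiv.congr_deriv (Eq.symm ?_)
    have hED' := hED x
    simp only [Pi.div_apply]
    set s := Real.sqrt (R x) with hsdef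
    rw [← hsq] at hED' ⊢
    have hEpos : 0 < E x := Real.exp_pos _
    field_simp
    linear_combination 4 * hED'
end

section
/- Let u : ℝ → ℝ be continuously differentiable and λ ∈ ℝ. Let Ψ : ℝ → ℝ be twice differentiable with Ψ''(x) = (u(x) + λ)·Ψ(x) for all x, and let R : ℝ → ℝ be three times differentiable with R'''(x) − 4(u(x) + λ)·R'(x) − 2u'(x)·R(x) = 0 for all x. Then the function W(x) := R'(x)·Ψ(x) − 2·R(x)·Ψ'(x) again satisfies W''(x) = (u(x) + λ)·W(x) for all x ∈ ℝ. (This expresses that the Lie point symmetry generator 2R∂ₓ + R'Ψ∂_Ψ of equation (3.5) maps solutions of the Schrödinger equation to solutions.) -/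
/-- The Lie symmetry `2R∂ₓ + R'Ψ∂_Ψ` maps solutions of the Schrödinger equation to
solutions: `W = R'Ψ - 2RΨ'` again satisfies `W'' = (u+λ)W`. -/
theorem lie_symmetry_maps_solutions
    (u u' : ℝ → ℝ) (lam : ℝ) (Ψ Ψ' Ψ'' R R' R'' R''' : ℝ → ℝ)
    (hu : ∀ x, HasDerivAt u (u' x) x) (hu'c : Continuous u')
    (hΨ : ∀ x, HasDerivAt Ψ (Ψ' x) x) (hΨ' : ∀ x, HasDerivAt Ψ' (Ψ'' x) x)
    (hSch : ∀ x, Ψ'' x = (u x + lam) * Ψ x)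
    (hR : ∀ x, HasDerivAt R (R' x) x) (hR' : ∀ x, HasDerivAt R' (R'' x) x)
    (hR'' : ∀ x, HasDerivAt R'' (R''' x) x)
    (heqR : ∀ x, R''' x - 4 * (u x + lam) * R' x - 2 * u' x * R x = 0) :
    ∃ W' W'' : ℝ → ℝ,
      (∀ x, HasDerivAt (fun y => R' y * Ψ y - 2 * R y * Ψ' y) (W' x) x) ∧
      (∀ x, HasDerivAt W' (W'' x) x) ∧
      (∀ x, W'' x = (u x + lam) * (R' x * Ψ x - 2 * R x * Ψ' x)) := by
  -- derivative of Ψ''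
  have hΨ'' : ∀ x, HasDerivAt Ψ'' (u' x * Ψ x + (u x + lam) * Ψ' x) x := by
    intro x
    have h := (((hu x).add_const lam).mul (hΨ x))
    have h2 := h.congr_of_eventuallyEq (Filter.Eventually.of_forall fun y => (hSch y))
    simpa using h2
  refine ⟨fun x => R'' x * Ψ x - R' x * Ψ' x - 2 * R x * Ψ'' x,
    fun x => (u x + lam) * (R' x * Ψ x - 2 * R x * Ψ' x), ?_, ?_, fun x => rfl⟩
  · intro x
    have h := ((hR' x).mul (hΨ x)).sub (((hR x).const_mul 2).mul (hΨ' x))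
    refine h.congr_deriv ?_
    ring
  · intro x
    have h := (((hR'' x).mul (hΨ x)).sub ((hR' x).mul (hΨ' x))).sub
      (((hR x).const_mul 2).mul (hΨ'' x))
    refine h.congr_deriv ?_
    linear_combination (Ψ x) * heqR x - 3 * R' x * hSch x
end

section
/- Let u : ℝ → ℝ be continuous, let λ, μ ∈ ℝ, and let R : ℝ → ℝ be twice differentiable with R(x) ≠ 0 for all x, satisfying −(1/2)·R·R'' + (1/4)·R'² + (u + λ)·R² = μ² on ℝ. Then p(x) := ((1/2)·R'(x) + μ)/R(x) satisfies the Riccati equation p'(x) + p(x)² = u(x) + λ for all x ∈ ℝ; consequently the Schrödinger operator factorizes: for every twice differentiable f : ℝ → ℝ and all x, f''(x) − (u(x) + λ)·f(x) = (f' − p·f)'(x) + p(x)·(f'(x) − p(x)·f(x)). -/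
/-- From the Ermakov–Drach relation, `p = ((1/2)R' + μ)/R` satisfies the Riccati
equation `p' + p² = u + λ`, whence the Schrödinger operator factorizes as
`∂ₓₓ - (u+λ) = (∂ₓ + p)(∂ₓ - p)`. -/
theorem riccati_and_factorization
    (u R R' R'' : ℝ → ℝ) (lam μ : ℝ)
    (hu : Continuous u)
    (hR : ∀ x, HasDerivAt R (R' x) x) (hR' : ∀ x, HasDerivAt R' (R'' x) x)
    (hRne : ∀ x, R x ≠ 0)
    (hED : ∀ x, -(1/2) * R x * R'' x + (1/4) * (R' x)^2 + (u x + lam) * (R x)^2 = μ^2) :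
    (∃ p' : ℝ → ℝ,
      (∀ x, HasDerivAt (fun y => ((1/2) * R' y + μ) / R y) (p' x) x) ∧
      (∀ x, p' x + (((1/2) * R' x + μ) / R x)^2 = u x + lam)) ∧
    (∀ f f' f'' : ℝ → ℝ,
      (∀ x, HasDerivAt f (f' x) x) → (∀ x, HasDerivAt f' (f'' x) x) →
      ∀ x, f'' x - (u x + lam) * f x =
        deriv (fun y => f' y - (((1/2) * R' y + μ) / R y) * f y) x
          + (((1/2) * R' x + μ) / R x) * (f' x - (((1/2) * R' x + μ) / R x) * f x)) := by
  set P' : ℝ → ℝ := fun x =>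
    ((1/2) * R'' x * R x - ((1/2) * R' x + μ) * R' x) / (R x)^2 with hP'
  have hderiv : ∀ x, HasDerivAt (fun y => ((1/2) * R' y + μ) / R y) (P' x) x := by
    intro x
    have h1 : HasDerivAt (fun y => (1/2) * R' y + μ) ((1/2) * R'' x) x := by
      simpa using ((hR' x).const_mul (1/2 : ℝ)).add_const μ
    exact h1.div (hR x) (hRne x)
  have hric : ∀ x, P' x + (((1/2) * R' x + μ) / R x)^2 = u x + lam := by
    intro x
    have h := hED x
    have hx := hRne x
    simp only [hP']
    field_simp [hP']
    ring_nf
    ring_nf at h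
    nlinarith [h, sq_nonneg (R x)]
  refine ⟨⟨P', hderiv, hric⟩, ?_⟩
  intro f f' f'' hf hf' x
  have hd : HasDerivAt (fun y => f' y - (((1/2) * R' y + μ) / R y) * f y)
      (f'' x - (P' x * f x + (((1/2) * R' x + μ) / R x) * f' x)) x :=
    (hf' x).sub ((hderiv x).mul (hf x))
  rw [hd.deriv]
  have := hric x
  linear_combination (f x) * this
end

section
/- Trace formula. Let g ≥ 1, let γ₁, …, γ_g : ℝ → ℝ be twice differentiable, let E₁, …, E_{2g+1} ∈ ℝ, let u : ℝ → ℝ, and set R(x; λ) := Π_{k=1}^{g} (λ − γ_k(x)). If for every x ∈ ℝ and every λ ∈ ℝ one has −(1/2)·R(x;λ)·∂ₓ²R(x;λ) + (1/4)·(∂ₓR(x;λ))² + (u(x) + λ)·R(x;λ)² = Π_{j=1}^{2g+1} (λ − E_j), then u(x) = 2·Σ_{k=1}^{g} γ_k(x) − Σ_{j=1}^{2g+1} E_j for all x ∈ ℝ (equation (2.2)). -/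
open Polynomial Finset

private lemma natDegree_prod_X_sub_C' {ι : Type*} (s : Finset ι) (f : ι → ℝ) :
    (∏ i ∈ s, (X - C (f i))).natDegree = s.card := by
  rw [Polynomial.natDegree_prod_of_monic _ _ fun i _ => monic_X_sub_C _]
  simp

private lemma monic_prod_X_sub_C' {ι : Type*} (s : Finset ι) (f : ι → ℝ) :
    (∏ i ∈ s, (X - C (f i))).Monic :=
  monic_prod_of_monic _ _ fun i _ => monic_X_sub_C _

/-- Trace formula: if `R(x;λ) = Π (λ - γ_k(x))` satisfies the Ermakov–Drach relation
with `μ² = Π (λ - E_j)` identically in `λ`, then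
`u = 2Σγ_k - ΣE_j`. -/
theorem trace_formula
    (g : ℕ) (hg : 1 ≤ g) (γ γ' γ'' : Fin g → ℝ → ℝ)
    (E : Fin (2 * g + 1) → ℝ) (u : ℝ → ℝ)
    (hγ : ∀ k x, HasDerivAt (γ k) (γ' k x) x)
    (hγ' : ∀ k x, HasDerivAt (γ' k) (γ'' k x) x)
    (h : ∀ x lam : ℝ,
      -(1/2) * (∏ k, (lam - γ k x)) * deriv (deriv (fun y => ∏ k, (lam - γ k y))) x
        + (1/4) * (deriv (fun y => ∏ k, (lam - γ k y)) x) ^ 2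
        + (u x + lam) * (∏ k, (lam - γ k x)) ^ 2
      = ∏ j, (lam - E j)) :
    ∀ x : ℝ, u x = 2 * (∑ k, γ k x) - ∑ j, E j := by
  intro x
  classical
  -- first derivative of the product
  have hd1 : ∀ (lam y : ℝ), HasDerivAt (fun y => ∏ k, (lam - γ k y))
      (∑ k, (∏ j ∈ univ.erase k, (lam - γ j y)) * (-(γ' k y))) y := by
    intro lam y
    have := HasDerivAt.fun_finsetProd (u := univ) (f := fun k y => lam - γ k y)
      (f' := fun k => -(γ' k y)) (x := y) (fun i _ => (hγ i y).const_sub lam)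
    simpa [smul_eq_mul] using this
  have hder1 : ∀ lam : ℝ, deriv (fun y => ∏ k, (lam - γ k y)) =
      fun y => ∑ k, (∏ j ∈ univ.erase k, (lam - γ j y)) * (-(γ' k y)) := by
    intro lam; funext y; exact (hd1 lam y).deriv
  -- second derivative
  have hd2 : ∀ lam : ℝ, HasDerivAt
      (fun y => ∑ k, (∏ j ∈ univ.erase k, (lam - γ j y)) * (-(γ' k y)))
      (∑ k, ((∑ j ∈ univ.erase k, (∏ m ∈ (univ.erase k).erase j, (lam - γ m x)) * (-(γ' j x)))
          * (-(γ' k x))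
        + (∏ j ∈ univ.erase k, (lam - γ j x)) * (-(γ'' k x)))) x := by
    intro lam
    apply HasDerivAt.fun_sum
    intro k _
    have hA : HasDerivAt (fun y => ∏ j ∈ univ.erase k, (lam - γ j y))
        (∑ j ∈ univ.erase k, (∏ m ∈ (univ.erase k).erase j, (lam - γ m x)) * (-(γ' j x))) x := by
      have := HasDerivAt.fun_finsetProd (u := univ.erase k) (f := fun j y => lam - γ j y)
        (f' := fun j => -(γ' j x)) (x := x) (fun i _ => (hγ i x).const_sub lam)
      simpa [smul_eq_mul] using this
    exact hA.mul ((hγ' k x).neg)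
  have hder2 : ∀ lam : ℝ, deriv (deriv (fun y => ∏ k, (lam - γ k y))) x =
      ∑ k, ((∑ j ∈ univ.erase k, (∏ m ∈ (univ.erase k).erase j, (lam - γ m x)) * (-(γ' j x)))
          * (-(γ' k x))
        + (∏ j ∈ univ.erase k, (lam - γ j x)) * (-(γ'' k x))) := by
    intro lam; rw [hder1 lam]; exact (hd2 lam).deriv
  -- polynomials
  set Rp : ℝ[X] := ∏ k, (X - C (γ k x)) with hRp
  set p1 : ℝ[X] := ∑ k, (∏ j ∈ univ.erase k, (X - C (γ j x))) * C (-(γ' k x)) with hp1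
  set p2 : ℝ[X] := ∑ k, ((∑ j ∈ univ.erase k,
        (∏ m ∈ (univ.erase k).erase j, (X - C (γ m x))) * C (-(γ' j x))) * C (-(γ' k x))
      + (∏ j ∈ univ.erase k, (X - C (γ j x))) * C (-(γ'' k x))) with hp2
  set Ep : ℝ[X] := ∏ j, (X - C (E j)) with hEp
  set Q : ℝ[X] := C (-(1/2) : ℝ) * (Rp * p2) + C (1/4 : ℝ) * p1 ^ 2
      + (C (u x) + X) * Rp ^ 2 - Ep with hQ
  have hQ0 : Q = 0 := by
    apply Polynomial.funext
    intro lam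
    have hh := h x lam
    rw [hder1 lam, (hd2 lam).deriv] at hh
    beta_reduce at hh
    simp only [hQ, hRp, hp1, hp2, hEp, eval_sub, eval_add, eval_mul, eval_pow, eval_C, eval_X,
      eval_prod, eval_finset_sum, eval_zero]
    linarith [hh]
  -- degree bookkeeping
  have hcard : ∀ k : Fin g, (univ.erase k).card = g - 1 := by
    intro k; rw [card_erase_of_mem (mem_univ k)]; simp
  have hRdeg : Rp.natDegree = g := by
    rw [hRp, natDegree_prod_X_sub_C']; simp
  have hRmon : Rp.Monic := monic_prod_X_sub_C' _ _
  have hp1deg : p1.natDegree ≤ g - 1 := by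
    apply natDegree_sum_le_of_forall_le
    intro k _
    calc ((∏ j ∈ univ.erase k, (X - C (γ j x))) * C (-(γ' k x))).natDegree
        ≤ _ + _ := natDegree_mul_le
      _ ≤ (g - 1) + 0 := by
          gcongr
          · rw [natDegree_prod_X_sub_C', hcard]
          · exact (natDegree_C _).le
      _ = g - 1 := by omega
  have hp2deg : p2.natDegree ≤ g - 1 := by
    apply natDegree_sum_le_of_forall_le
    intro k _
    apply natDegree_add_le_of_degree_le
    · calc _ ≤ _ + _ := natDegree_mul_le
        _ ≤ (g - 1) + 0 := by
            gcongr
            · apply natDegree_sum_le_of_forall_le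
              intro j _
              calc _ ≤ _ + _ := natDegree_mul_le
                _ ≤ (g - 1) + 0 := by
                    gcongr
                    · rw [natDegree_prod_X_sub_C']
                      calc ((univ.erase k).erase j).card ≤ (univ.erase k).card :=
                            card_erase_le
                        _ = g - 1 := hcard k
                    · exact (natDegree_C _).le
                _ = g - 1 := by omega
            · exact (natDegree_C _).le
        _ = g - 1 := by omega
    · calc _ ≤ _ + _ := natDegree_mul_le
        _ ≤ (g - 1) + 0 := by
            gcongr
            · rw [natDegree_prod_X_sub_C', hcard]
            · exact (natDegree_C _).le
        _ = g - 1 := by omega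
  -- extract the coefficient at 2g
  have hc : Q.coeff (2 * g) = 0 := by rw [hQ0]; simp
  have h1 : (Rp * p2).coeff (2 * g) = 0 := by
    apply coeff_eq_zero_of_natDegree_lt
    calc (Rp * p2).natDegree ≤ _ + _ := natDegree_mul_le
      _ ≤ g + (g - 1) := by gcongr; exact hRdeg.le
      _ < 2 * g := by omega
  have h2 : (p1 ^ 2).coeff (2 * g) = 0 := by
    apply coeff_eq_zero_of_natDegree_lt
    calc (p1 ^ 2).natDegree ≤ 2 * p1.natDegree := natDegree_pow_le
      _ ≤ 2 * (g - 1) := by gcongr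
      _ < 2 * g := by omega
  have hR2deg : (Rp ^ 2).natDegree = 2 * g := by
    rw [hRmon.natDegree_pow, hRdeg]
  have hR2mon : (Rp ^ 2).Monic := hRmon.pow 2
  have h3 : (Rp ^ 2).coeff (2 * g) = 1 := by
    have := hR2mon.coeff_natDegree
    rwa [hR2deg] at this
  have hnextR : Rp.nextCoeff = -∑ k, γ k x := prod_X_sub_C_nextCoeff _
  have h4 : (X * Rp ^ 2).coeff (2 * g) = -(2 * ∑ k, γ k x) := by
    obtain ⟨m, hm⟩ : ∃ m, 2 * g = m + 1 := ⟨2 * g - 1, by omega⟩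
    rw [hm, coeff_X_mul]
    have hm' : m = (Rp ^ 2).natDegree - 1 := by omega
    rw [hm', ← nextCoeff_of_natDegree_pos (by omega)]
    rw [sq, hRmon.nextCoeff_mul hRmon, hnextR]; ring
  have h5 : Ep.coeff (2 * g) = -∑ j, E j := by
    have hEdeg : Ep.natDegree = 2 * g + 1 := by
      rw [hEp, natDegree_prod_X_sub_C']; simp
    have : Ep.coeff (Ep.natDegree - 1) = Ep.nextCoeff :=
      (nextCoeff_of_natDegree_pos (by omega)).symm
    rw [hEdeg] at this
    simpa using this.trans (prod_X_sub_C_nextCoeff _)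
  rw [hQ] at hc
  simp only [coeff_sub, coeff_add, coeff_C_mul, add_mul, coeff_X_mul] at hc
  rw [h1, h2] at hc
  have hc' : (C (u x) * Rp ^ 2).coeff (2 * g) + (X * Rp ^ 2).coeff (2 * g)
      - Ep.coeff (2 * g) = 0 := by
    have := hc
    simp only [coeff_C_mul] at this ⊢
    linarith [this]
  rw [coeff_C_mul, h3, h4, h5] at hc'
  linarith [hc']
end

section
/- Let g ≥ 1, let u : ℝ → ℝ be continuously differentiable, let γ₁, …, γ_g : ℝ → ℝ be three times differentiable, and set R(x; λ) := Π_{k=1}^{g} (λ − γ_k(x)). If for every λ ∈ ℝ and every x ∈ ℝ one has ∂ₓ³R(x;λ) − 4(u(x) + λ)·∂ₓR(x;λ) − 2u'(x)·R(x;λ) = 0, then the function x ↦ u(x) − 2·Σ_{k=1}^{g} γ_k(x) is constant on ℝ; that is, there is a constant c₁ with u(x) = 2·Σ_{k=1}^{g} γ_k(x) + 2c₁ (the first line of the change of variables (4.2)). -/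
open Finset Polynomial

/-- Three-times differentiability predicate. -/
def T3aux (f : ℝ → ℝ) : Prop :=
  Differentiable ℝ f ∧ Differentiable ℝ (deriv f) ∧ Differentiable ℝ (deriv (deriv f))

lemma T3aux.const (a : ℝ) : T3aux (fun _ => a) := by
  refine ⟨differentiable_const _, ?_, ?_⟩ <;>
    · simp only [deriv_const']
      exact differentiable_const _

lemma T3aux.mul {f h : ℝ → ℝ} (hf : T3aux f) (hh : T3aux h) :
    T3aux (fun y => f y * h y) := by
  obtain ⟨hf1, hf2, hf3⟩ := hf
  obtain ⟨hh1, hh2, hh3⟩ := hh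
  have d1 : deriv (fun y => f y * h y) = fun x => deriv f x * h x + f x * deriv h x :=
    funext fun x => deriv_mul (hf1 x) (hh1 x)
  have hd1 : Differentiable ℝ (fun x => deriv f x * h x + f x * deriv h x) :=
    (hf2.mul hh1).add (hf1.mul hh2)
  have d2 : deriv (fun x => deriv f x * h x + f x * deriv h x) =
      fun x => (deriv (deriv f) x * h x + deriv f x * deriv h x)
        + (deriv f x * deriv h x + f x * deriv (deriv h) x) := by
    funext x
    rw [deriv_fun_add (f := fun x => deriv f x * h x) (g := fun x => f x * deriv h x) ((hf2.mul hh1) x) ((hf1.mul hh2) x),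
      deriv_fun_mul (hf2 x) (hh1 x), deriv_fun_mul (hf1 x) (hh2 x)]
  have hd2 : Differentiable ℝ (fun x => (deriv (deriv f) x * h x + deriv f x * deriv h x)
        + (deriv f x * deriv h x + f x * deriv (deriv h) x)) :=
    ((hf3.mul hh1).add (hf2.mul hh2)).add ((hf2.mul hh2).add (hf1.mul hh3))
  exact ⟨hf1.mul hh1, by rw [d1]; exact hd1, by rw [d1, d2]; exact hd2⟩

/-- Derivative of a finite sum of functions times constants. -/
lemma deriv_sum_mul_const {ι : Type*} {s : Finset ι} {a : ι → ℝ → ℝ}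
    (ha : ∀ t ∈ s, Differentiable ℝ (a t)) (w : ι → ℝ) :
    deriv (fun y => ∑ t ∈ s, a t y * w t) = fun x => ∑ t ∈ s, deriv (a t) x * w t :=
  funext fun x =>
    (HasDerivAt.fun_sum fun t ht => ((ha t ht x).hasDerivAt.mul_const (w t))).deriv

/-- If `R(x;λ) = Π (λ - γ_k(x))` solves `∂ₓ³R - 4(u+λ)∂ₓR - 2u'R = 0` for all `λ`,
then `u - 2Σγ_k` is constant: `u = 2Σγ_k + 2c₁`. -/
theorem trace_formula_from_third_order
    (g : ℕ) (hg : 1 ≤ g) (u u' : ℝ → ℝ) (γ γ' γ'' γ''' : Fin g → ℝ → ℝ)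
    (hu : ∀ x, HasDerivAt u (u' x) x) (hu'c : Continuous u')
    (hγ : ∀ k x, HasDerivAt (γ k) (γ' k x) x)
    (hγ' : ∀ k x, HasDerivAt (γ' k) (γ'' k x) x)
    (hγ'' : ∀ k x, HasDerivAt (γ'' k) (γ''' k x) x)
    (heq : ∀ lam x : ℝ,
      deriv (deriv (deriv (fun y => ∏ k, (lam - γ k y)))) x
        - 4 * (u x + lam) * deriv (fun y => ∏ k, (lam - γ k y)) x
        - 2 * u' x * (∏ k, (lam - γ k x)) = 0) :
    ∃ c₁ : ℝ, ∀ x : ℝ, u x = 2 * (∑ k, γ k x) + 2 * c₁ := by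
  classical
  obtain ⟨n, rfl⟩ : ∃ n, g = n + 1 := ⟨g - 1, by omega⟩
  set K := (Finset.univ : Finset (Fin (n + 1))).powerset with hK
  set c : Finset (Fin (n + 1)) → ℝ → ℝ := fun t y => ∏ i ∈ t, (-γ i y) with hc
  -- each γ_k is three times differentiable, hence so is each c t
  have hneg : ∀ k, T3aux (fun y => -γ k y) := by
    intro k
    have e1 : deriv (fun y => -γ k y) = fun x => -γ' k x :=
      funext fun x => ((hγ k x).neg).deriv
    have e2 : deriv (fun x => -γ' k x) = fun x => -γ'' k x :=
      funext fun x => ((hγ' k x).neg).deriv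
    refine ⟨fun x => ((hγ k x).neg).differentiableAt, ?_, ?_⟩
    · rw [e1]; exact fun x => ((hγ' k x).neg).differentiableAt
    · rw [e1, e2]; exact fun x => ((hγ'' k x).neg).differentiableAt
  have hT3 : ∀ t : Finset (Fin (n + 1)), T3aux (c t) := by
    intro t
    induction t using Finset.induction_on with
    | empty => simpa [hc] using T3aux.const 1
    | @insert a s ha ih =>
      have : c (insert a s) = fun y => (-γ a y) * c s y := by
        funext y
        show ∏ i ∈ insert a s, (-γ i y) = _
        rw [Finset.prod_insert ha]
      rw [this]
      exact (hneg a).mul ih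
  -- expansion of the product as a polynomial in lam
  have hexp : ∀ (lam : ℝ), (fun y => ∏ k, (lam - γ k y))
      = fun y => ∑ t ∈ K, c t y * lam ^ (n + 1 - t.card) := by
    intro lam
    funext y
    have := Finset.prod_add (fun i => -γ i y) (fun _ => lam) Finset.univ
    simp only [Finset.prod_const] at this
    calc (∏ k, (lam - γ k y)) = ∏ k, ((-γ k y) + lam) := by
          refine Finset.prod_congr rfl fun k _ => by ring
      _ = ∑ t ∈ K, c t y * lam ^ (Finset.univ \ t).card := this
      _ = ∑ t ∈ K, c t y * lam ^ (n + 1 - t.card) := by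
          refine Finset.sum_congr rfl fun t ht => ?_
          rw [Finset.card_sdiff_of_subset (Finset.mem_powerset.mp ht), Finset.card_univ,
            Fintype.card_fin]
  -- the three x-derivatives, expanded
  have hD1 : ∀ (lam : ℝ), deriv (fun y => ∏ k, (lam - γ k y))
      = fun x => ∑ t ∈ K, deriv (c t) x * lam ^ (n + 1 - t.card) := by
    intro lam
    rw [hexp lam]
    exact deriv_sum_mul_const (fun t _ => (hT3 t).1) _
  have hD2 : ∀ (lam : ℝ), deriv (deriv (fun y => ∏ k, (lam - γ k y)))
      = fun x => ∑ t ∈ K, deriv (deriv (c t)) x * lam ^ (n + 1 - t.card) := by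
    intro lam
    rw [hD1 lam]
    exact deriv_sum_mul_const (fun t _ => (hT3 t).2.1) _
  have hD3 : ∀ (lam : ℝ), deriv (deriv (deriv (fun y => ∏ k, (lam - γ k y))))
      = fun x => ∑ t ∈ K, deriv (deriv (deriv (c t))) x * lam ^ (n + 1 - t.card) := by
    intro lam
    rw [hD2 lam]
    exact deriv_sum_mul_const (fun t _ => (hT3 t).2.2) _
  -- special values
  have hc_empty : c ∅ = fun _ => (1 : ℝ) := by funext y; simp [hc]
  have hd1_empty : deriv (c ∅) = fun _ => (0 : ℝ) := by rw [hc_empty]; simp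
  have hd2_empty : deriv (deriv (c ∅)) = fun _ => (0 : ℝ) := by rw [hd1_empty]; simp
  have hd3_empty : deriv (deriv (deriv (c ∅))) = fun _ => (0 : ℝ) := by
    rw [hd2_empty]; simp
  have hd1_single : ∀ (k : Fin (n + 1)) (x : ℝ), deriv (c {k}) x = -γ' k x := by
    intro k x
    have : c {k} = fun y => -γ k y := by funext y; simp [hc]
    rw [this]
    exact ((hγ k x).neg).deriv
  -- the key pointwise identity  u' = 2 Σ γ'
  have key : ∀ x : ℝ, u' x = 2 * ∑ k, γ' k x := by
    intro x
    set P : Polynomial ℝ :=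
      (∑ t ∈ K, C (deriv (deriv (deriv (c t))) x) * X ^ (n + 1 - t.card))
        - C 4 * (C (u x) + X) * (∑ t ∈ K, C (deriv (c t) x) * X ^ (n + 1 - t.card))
        - C (2 * u' x) * (∑ t ∈ K, C (c t x) * X ^ (n + 1 - t.card)) with hP
    have hP0 : P = 0 := by
      apply Polynomial.funext
      intro lam
      have h := heq lam x
      have he : (∏ k, (lam - γ k x)) = ∑ t ∈ K, c t x * lam ^ (n + 1 - t.card) := by
        simpa using congrFun (hexp lam) x
      rw [hD3 lam, hD1 lam, he] at h
      simp only at h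
      simp only [hP, eval_sub, eval_mul, eval_add, eval_C, eval_X, eval_pow,
        eval_finset_sum, eval_zero]
      linear_combination h
    have hcoeff : P.coeff (n + 1) = 0 := by rw [hP0]; simp
    -- compute coefficients
    have hcard : ∀ t ∈ K, t.card ≤ n + 1 := by
      intro t ht
      simpa using Finset.card_le_card (Finset.mem_powerset.mp ht)
    have topcoeff : ∀ a : Finset (Fin (n + 1)) → ℝ,
        (∑ t ∈ K, C (a t) * X ^ (n + 1 - t.card)).coeff (n + 1) = a ∅ := by
      intro a
      rw [finset_sum_coeff]
      rw [Finset.sum_eq_single ∅]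
      · simp
      · intro t ht hne
        have h1 : 1 ≤ t.card := Finset.card_pos.mpr (Finset.nonempty_iff_ne_empty.mpr hne)
        have h2 := hcard t ht
        have : n + 1 ≠ n + 1 - t.card := by omega
        simp [coeff_C_mul, coeff_X_pow, this]
      · intro h
        exact absurd (by simp [hK]) h
    have subcoeff : ∀ a : Finset (Fin (n + 1)) → ℝ,
        (∑ t ∈ K, C (a t) * X ^ (n + 1 - t.card)).coeff n = ∑ k, a {k} := by
      intro a
      rw [finset_sum_coeff]
      have step1 : ∀ t ∈ K, (C (a t) * X ^ (n + 1 - t.card)).coeff n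
          = if t.card = 1 then a t else 0 := by
        intro t ht
        have h2 := hcard t ht
        rcases eq_or_ne t.card 1 with h | h
        · simp [h, coeff_C_mul, coeff_X_pow]
        · have : n ≠ n + 1 - t.card := by omega
          simp [coeff_C_mul, coeff_X_pow, this, h]
      rw [Finset.sum_congr rfl step1, ← Finset.sum_filter]
      have : K.filter (fun t => t.card = 1)
          = (Finset.univ : Finset (Fin (n + 1))).powersetCard 1 := by
        rw [Finset.powersetCard_eq_filter, hK]
      rw [this, Finset.powersetCard_one, Finset.sum_map]
      rfl
    -- assemble
    have hmid : ((C (u x) + X) * (∑ t ∈ K, C (deriv (c t) x) * X ^ (n + 1 - t.card))).coeff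
        (n + 1) = u x * (deriv (c ∅) x) + ∑ k, deriv (c {k}) x := by
      rw [add_mul, Polynomial.coeff_add, coeff_C_mul, coeff_X_mul,
        topcoeff (fun t => deriv (c t) x), subcoeff (fun t => deriv (c t) x)]
    have hPc : P.coeff (n + 1) =
        (deriv (deriv (deriv (c ∅))) x)
          - 4 * (u x * (deriv (c ∅) x) + ∑ k, deriv (c {k}) x)
          - (2 * u' x) * (c ∅ x) := by
      rw [hP]
      simp only [coeff_sub, mul_assoc, coeff_C_mul]
      rw [topcoeff (fun t => deriv (deriv (deriv (c t))) x), topcoeff (fun t => c t x), hmid]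
    rw [hPc] at hcoeff
    rw [hd3_empty, hd1_empty, hc_empty] at hcoeff
    simp only [Finset.sum_congr rfl (fun k _ => hd1_single k x)] at hcoeff
    have hs : (∑ k, -γ' k x) = -∑ k, γ' k x := by simp
    rw [hs] at hcoeff
    linarith [hcoeff]
  -- conclude: u - 2 Σ γ is constant
  have hdiff : ∀ x : ℝ, HasDerivAt (fun x => u x - 2 * ∑ k, γ k x) 0 x := by
    intro x
    have h1 : HasDerivAt (fun x => ∑ k, γ k x) (∑ k, γ' k x) x :=
      HasDerivAt.fun_sum fun k _ => hγ k x
    have h2 : HasDerivAt (fun x => u x - 2 * ∑ k, γ k x)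
        (u' x - 2 * ∑ k, γ' k x) x := (hu x).sub ((h1.const_mul 2))
    have : u' x - 2 * ∑ k, γ' k x = 0 := by rw [key x]; ring
    rwa [this] at h2
  refine ⟨(u 0 - 2 * ∑ k, γ k 0) / 2, fun x => ?_⟩
  have hconst : (fun x => u x - 2 * ∑ k, γ k x) x = (fun x => u x - 2 * ∑ k, γ k x) 0 :=
    is_const_of_deriv_eq_zero (fun x => (hdiff x).differentiableAt)
      (fun x => (hdiff x).deriv) x 0
  simp only at hconst
  linarith [hconst]
end

section
/- Drach–Dubrovin equations. Let g ≥ 1, let γ₁, …, γ_g : ℝ → ℝ be twice differentiable, let E₁, …, E_{2g+1} ∈ ℝ, let u : ℝ → ℝ, and set R(x; λ) := Π_{k=1}^{g} (λ − γ_k(x)). Suppose that for every x ∈ ℝ and every λ ∈ ℝ, −(1/2)·R(x;λ)·∂ₓ²R(x;λ) + (1/4)·(∂ₓR(x;λ))² + (u(x) + λ)·R(x;λ)² = Π_{j=1}^{2g+1} (λ − E_j). Then for each k ∈ {1, …, g} and every x ∈ ℝ: (γ_k'(x))² · (Π_{j≠k} (γ_k(x) − γ_j(x)))² = 4 · Π_{j=1}^{2g+1}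 (γ_k(x) − E_j). (Equivalently, with μ_k(x)² := Π_{j=1}^{2g+1}(γ_k(x) − E_j), the zeroes obey dγ_k/dx = ∓2μ_k / Π_{j≠k}(γ_k − γ_j), equation (4.3).) -/
/-- Drach–Dubrovin equations: if `R(x;λ) = Π (λ - γ_k(x))` satisfies the
Ermakov–Drach relation with `μ² = Π (λ - E_j)` identically in `λ`, then the zeroes obey
`(γ_k')² (Π_{j≠k} (γ_k - γ_j))² = 4 Π_j (γ_k - E_j)`. -/
theorem drach_dubrovin
    (g : ℕ) (hg : 1 ≤ g) (γ γ' γ'' : Fin g → ℝ → ℝ)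
    (E : Fin (2 * g + 1) → ℝ) (u : ℝ → ℝ)
    (hγ : ∀ k x, HasDerivAt (γ k) (γ' k x) x)
    (hγ' : ∀ k x, HasDerivAt (γ' k) (γ'' k x) x)
    (h : ∀ x lam : ℝ,
      -(1/2) * (∏ k, (lam - γ k x)) * deriv (deriv (fun y => ∏ k, (lam - γ k y))) x
        + (1/4) * (deriv (fun y => ∏ k, (lam - γ k y)) x) ^ 2
        + (u x + lam) * (∏ k, (lam - γ k x)) ^ 2
      = ∏ j, (lam - E j)) :
    ∀ (k : Fin g) (x : ℝ),
      (γ' k x) ^ 2 * (∏ j ∈ Finset.univ.erase k, (γ k x - γ j x)) ^ 2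
        = 4 * ∏ j, (γ k x - E j) := by
  intro k x
  set lam := γ k x with hlam
  -- the first derivative of R in x
  have hD : HasDerivAt (fun y => ∏ i, (lam - γ i y))
      (∑ i, (∏ j ∈ Finset.univ.erase i, (lam - γ j x)) • (-(γ' i x))) x := by
    exact HasDerivAt.fun_finsetProd (fun i _ => ((hγ i x).const_sub lam))
  have hzero : (∏ i, (lam - γ i x)) = 0 :=
    Finset.prod_eq_zero (Finset.mem_univ k) (by simp [hlam])
  have hsum : (∑ i, (∏ j ∈ Finset.univ.erase i, (lam - γ j x)) • (-(γ' i x)))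
      = (∏ j ∈ Finset.univ.erase k, (γ k x - γ j x)) * (-(γ' k x)) := by
    rw [← hlam]
    refine Finset.sum_eq_single k (fun i _ hik => ?_) (by simp)
    have : k ∈ Finset.univ.erase i := Finset.mem_erase.2 ⟨(Ne.symm hik), Finset.mem_univ k⟩
    rw [Finset.prod_eq_zero this (by simp [hlam])]
    simp
  have hDval : deriv (fun y => ∏ i, (lam - γ i y)) x
      = (∏ j ∈ Finset.univ.erase k, (γ k x - γ j x)) * (-(γ' k x)) := by
    rw [hD.deriv, hsum]
  have key := h x lam
  rw [hDval, hzero] at key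
  ring_nf at key ⊢
  linarith [key]
end

section
/- For every natural number n, the function y : ℝ → ℝ defined by y(x) := He_n(√2·x) · exp(−x²/2), where He_n is the n-th probabilists' Hermite polynomial, satisfies the harmonic-oscillator equation y''(x) = (x² − 2n − 1)·y(x) for all x ∈ ℝ. (This exhibits the quadrature/Liouvillian integrability of the quantum harmonic oscillator Y'' = (x² − 2μ − 1)Y whenever the parameter μ is a nonnegative integer.) -/
open Polynomial

lemma deriv_hermite_succ (n : ℕ) :
    derivative (hermite (n+1)) = (n+1 : ℤ[X]) * hermite n := by
  induction n with
  | zero => simp [hermite_succ, hermite_zero]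
  | succ n ih =>
    have h : derivative (hermite n) = X * hermite n - hermite (n+1) := by
      rw [hermite_succ]; ring
    rw [hermite_succ (n+1), derivative_sub, derivative_mul, derivative_X, ih,
      derivative_mul, h]
    simp only [derivative_add, derivative_natCast, derivative_one]
    push_cast
    ring

lemma hermite_ode (n : ℕ) :
    derivative (derivative (hermite n)) =
      X * derivative (hermite n) - (n : ℤ[X]) * hermite n := by
  cases n with
  | zero => simp
  | succ n =>
    have h : derivative (hermite n) = X * hermite n - hermite (n+1) := by
      rw [hermite_succ]; ring
    rw [deriv_hermite_succ, derivative_mul, h]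
    simp only [derivative_add, derivative_natCast, derivative_one]
    push_cast
    ring

noncomputable def Qop (p : ℝ[X]) : ℝ[X] :=
  C (Real.sqrt 2) * derivative p - C (Real.sqrt 2 / 2) * (X * p)

lemma hasDerivAt_F (p : ℝ[X]) (x : ℝ) :
    HasDerivAt (fun y : ℝ => p.eval (Real.sqrt 2 * y) * Real.exp (-y ^ 2 / 2))
      ((Qop p).eval (Real.sqrt 2 * x) * Real.exp (-x ^ 2 / 2)) x := by
  have hs : Real.sqrt 2 * Real.sqrt 2 = 2 := Real.mul_self_sqrt (by norm_num)
  have h1 : HasDerivAt (fun y : ℝ => p.eval (Real.sqrt 2 * y))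
      (Real.sqrt 2 * p.derivative.eval (Real.sqrt 2 * x)) x := by
    have := (p.hasDerivAt (Real.sqrt 2 * x)).comp x
      ((hasDerivAt_id x).const_mul (Real.sqrt 2))
    simpa [Function.comp_def, mul_comm] using this
  have hx : HasDerivAt (fun y : ℝ => -y ^ 2 / 2) (-x) x := by
    have := ((hasDerivAt_pow 2 x).neg).div_const 2
    refine this.congr_deriv ?_
    ring
  have h2 : HasDerivAt (fun y : ℝ => Real.exp (-y ^ 2 / 2))
      (-x * Real.exp (-x ^ 2 / 2)) x := by
    have := (Real.hasDerivAt_exp (-x ^ 2 / 2)).comp x hx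
    simpa [Function.comp_def, mul_comm] using this
  have := h1.mul h2
  refine this.congr_deriv ?_
  simp only [Qop, eval_sub, eval_mul, eval_C, eval_X]
  have hxx : Real.sqrt 2 / 2 * (Real.sqrt 2 * x) = x := by
    field_simp; linear_combination x * hs
  linear_combination (eval (Real.sqrt 2 * x) p * Real.exp (-x ^ 2 / 2)) * hxx

/-- For every `n : ℕ`, `y(x) = He_n(√2 x) · exp(-x²/2)` satisfies the
harmonic-oscillator equation `y'' = (x² - 2n - 1)y`. -/
theorem hermite_oscillator (n : ℕ) :
    ∀ x : ℝ,
      deriv (deriv (fun y : ℝ =>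
        (Polynomial.aeval (Real.sqrt 2 * y) (Polynomial.hermite n) : ℝ) *
          Real.exp (-y ^ 2 / 2))) x
        = (x ^ 2 - 2 * (n : ℝ) - 1) *
          ((Polynomial.aeval (Real.sqrt 2 * x) (Polynomial.hermite n) : ℝ) *
            Real.exp (-x ^ 2 / 2)) := by
  intro x
  set s := Real.sqrt 2 with hsdef
  have hs : s * s = 2 := Real.mul_self_sqrt (by norm_num)
  set P : ℝ[X] := (hermite n).map (algebraMap ℤ ℝ) with hP
  have hfun : (fun y : ℝ => (Polynomial.aeval (s * y) (Polynomial.hermite n) : ℝ) *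
      Real.exp (-y ^ 2 / 2)) = fun y : ℝ => P.eval (s * y) * Real.exp (-y ^ 2 / 2) := by
    funext y
    simp [hP, aeval_def, eval₂_eq_eval_map]
  have key : ∀ p : ℝ[X], deriv (fun y : ℝ => p.eval (s * y) * Real.exp (-y ^ 2 / 2))
      = fun y : ℝ => (Qop p).eval (s * y) * Real.exp (-y ^ 2 / 2) :=
    fun p => funext fun y => (hasDerivAt_F p y).deriv
  rw [hfun, key P, key (Qop P)]
  have haev : (Polynomial.aeval (s * x) (Polynomial.hermite n) : ℝ) = P.eval (s * x) := by
    simp [hP, aeval_def, eval₂_eq_eval_map]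
  rw [haev]
  have hD2 : derivative (derivative P) = X * derivative P - (n : ℝ[X]) * P := by
    have := congrArg (Polynomial.map (algebraMap ℤ ℝ)) (hermite_ode n)
    simpa [hP, derivative_map, Polynomial.map_mul, Polynomial.map_sub] using this
  have hc : (derivative (derivative P)).eval (s * x)
      = s * x * (derivative P).eval (s * x) - n * P.eval (s * x) := by
    rw [hD2]; simp
  simp only [Qop, derivative_sub, derivative_mul, derivative_C, derivative_X,
    eval_sub, eval_mul, eval_add, eval_C, eval_X, zero_mul, zero_add, one_mul]
  rw [hc]
  linear_combination ((eval (s * x) P * x ^ 2 * Real.exp (-x ^ 2 / 2) / 4) * (s * s + 2)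
    - (n : ℝ) * eval (s * x) P * Real.exp (-x ^ 2 / 2)
    - eval (s * x) P * Real.exp (-x ^ 2 / 2) / 2) * hs
end

section
/- Soliton-potential pencil. Let N > 0 and λ ∈ ℝ (the paper takes N = n(n+1)). Let χ : (−N, 0) → ℝ be three times differentiable with χ(u) > 0 and −N/cosh²(χ(u)) = u for all u ∈ (−N, 0), i.e. χ is the inverse of the soliton potential x ↦ −N·cosh⁻²x. Then χ'(u) ≠ 0 on (−N, 0) and for all u ∈ (−N, 0): −(1/2)·{χ, u} + (u + λ)·χ'(u)² = −3/(16(u+N)²) + (λ − 1)/(4u²) − (λ − N − 1)/(4u(u+N)). -/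
/-- The operator `λ`-pencil for the soliton potential: if `χ` is the inverse of
`x ↦ -N·cosh⁻²x` on `(-N, 0)` (with `χ > 0`), then `χ' ≠ 0` and
`-(1/2){χ,u} + (u+λ)χ'² = -3/(16(u+N)²) + (λ-1)/(4u²) - (λ-N-1)/(4u(u+N))`. -/
theorem soliton_pencil
    (N lam : ℝ) (hN : 0 < N) (χ χ' χ'' χ''' : ℝ → ℝ)
    (hχ : ∀ v ∈ Set.Ioo (-N) 0, HasDerivAt χ (χ' v) v)
    (hχ' : ∀ v ∈ Set.Ioo (-N) 0, HasDerivAt χ' (χ'' v) v)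
    (hχ'' : ∀ v ∈ Set.Ioo (-N) 0, HasDerivAt χ'' (χ''' v) v)
    (hχpos : ∀ v ∈ Set.Ioo (-N) 0, 0 < χ v)
    (hinv : ∀ v ∈ Set.Ioo (-N) 0, -N / Real.cosh (χ v) ^ 2 = v) :
    ∀ v ∈ Set.Ioo (-N) 0,
      χ' v ≠ 0 ∧
      -(1/2) * (χ''' v / χ' v - (3/2) * (χ'' v / χ' v) ^ 2) + (v + lam) * (χ' v) ^ 2
        = -3 / (16 * (v + N) ^ 2) + (lam - 1) / (4 * v ^ 2)
          - (lam - N - 1) / (4 * v * (v + N)) := by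
  have hIoo : IsOpen (Set.Ioo (-N) (0:ℝ)) := isOpen_Ioo
  -- basic derivative helpers
  have hc : ∀ w ∈ Set.Ioo (-N) 0,
      HasDerivAt (fun t => Real.cosh (χ t)) (Real.sinh (χ w) * χ' w) w := by
    intro w hw
    exact (Real.hasDerivAt_cosh (χ w)).comp w (hχ w hw)
  have hs : ∀ w ∈ Set.Ioo (-N) 0,
      HasDerivAt (fun t => Real.sinh (χ t)) (Real.cosh (χ w) * χ' w) w := by
    intro w hw
    exact (Real.hasDerivAt_sinh (χ w)).comp w (hχ w hw)
  -- the defining identity in polynomial form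
  have key0 : ∀ w ∈ Set.Ioo (-N) 0, w * Real.cosh (χ w) ^ 2 = -N := by
    intro w hw
    have h := hinv w hw
    have hc0 : Real.cosh (χ w) ^ 2 ≠ 0 := pow_ne_zero 2 (Real.cosh_pos (x := χ w)).ne'
    rw [div_eq_iff hc0] at h
    linarith [h]
  -- first derivative of the identity
  have key1 : ∀ w ∈ Set.Ioo (-N) 0,
      Real.cosh (χ w) ^ 2 + w * (2 * Real.cosh (χ w) * (Real.sinh (χ w) * χ' w)) = 0 := by
    intro w hw
    have hF : HasDerivAt (fun t => t * Real.cosh (χ t) ^ 2)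
        (Real.cosh (χ w) ^ 2 + w * (2 * Real.cosh (χ w) * (Real.sinh (χ w) * χ' w))) w := by
      have h := (hasDerivAt_id w).fun_mul ((hc w hw).fun_pow 2)
      refine h.congr_deriv ?_
      simp only [id_eq]
      push_cast
      ring
    have heq : (fun t => t * Real.cosh (χ t) ^ 2) =ᶠ[nhds w] (fun _ => -N) := by
      filter_upwards [hIoo.mem_nhds hw] with t ht using key0 t ht
    have hG : HasDerivAt (fun t => t * Real.cosh (χ t) ^ 2) 0 w :=
      (hasDerivAt_const w (-N)).congr_of_eventuallyEq heq
    exact hF.unique hG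
  -- second derivative of the identity
  have key2 : ∀ w ∈ Set.Ioo (-N) 0,
      4 * Real.cosh (χ w) * Real.sinh (χ w) * χ' w
        + 2 * w * ((Real.sinh (χ w) ^ 2 + Real.cosh (χ w) ^ 2) * (χ' w) ^ 2
            + Real.cosh (χ w) * Real.sinh (χ w) * χ'' w) = 0 := by
    intro w hw
    have hF : HasDerivAt
        (fun t => Real.cosh (χ t) ^ 2 + t * (2 * Real.cosh (χ t) * (Real.sinh (χ t) * χ' t)))
        (4 * Real.cosh (χ w) * Real.sinh (χ w) * χ' w
          + 2 * w * ((Real.sinh (χ w) ^ 2 + Real.cosh (χ w) ^ 2) * (χ' w) ^ 2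
            + Real.cosh (χ w) * Real.sinh (χ w) * χ'' w)) w := by
      have h := ((hc w hw).fun_pow 2).fun_add
        ((hasDerivAt_id w).fun_mul (((hc w hw).const_mul 2).fun_mul ((hs w hw).fun_mul (hχ' w hw))))
      refine h.congr_deriv ?_
      simp only [id_eq]
      push_cast
      ring
    have heq : (fun t => Real.cosh (χ t) ^ 2 + t * (2 * Real.cosh (χ t) * (Real.sinh (χ t) * χ' t)))
        =ᶠ[nhds w] (fun _ => 0) := by
      filter_upwards [hIoo.mem_nhds hw] with t ht using key1 t ht
    have hG : HasDerivAt
        (fun t => Real.cosh (χ t) ^ 2 + t * (2 * Real.cosh (χ t) * (Real.sinh (χ t) * χ' t)))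
        0 w := (hasDerivAt_const w 0).congr_of_eventuallyEq heq
    exact hF.unique hG
  -- third derivative of the identity
  have key3 : ∀ w ∈ Set.Ioo (-N) 0,
      6 * (Real.sinh (χ w) ^ 2 + Real.cosh (χ w) ^ 2) * (χ' w) ^ 2
        + 6 * Real.cosh (χ w) * Real.sinh (χ w) * χ'' w
        + 2 * w * (4 * Real.sinh (χ w) * Real.cosh (χ w) * (χ' w) ^ 3
            + 3 * (Real.sinh (χ w) ^ 2 + Real.cosh (χ w) ^ 2) * χ' w * χ'' w
            + Real.cosh (χ w) * Real.sinh (χ w) * χ''' w) = 0 := by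
    intro w hw
    have hF : HasDerivAt
        (fun t => 4 * Real.cosh (χ t) * Real.sinh (χ t) * χ' t
          + 2 * t * ((Real.sinh (χ t) ^ 2 + Real.cosh (χ t) ^ 2) * (χ' t) ^ 2
            + Real.cosh (χ t) * Real.sinh (χ t) * χ'' t))
        (6 * (Real.sinh (χ w) ^ 2 + Real.cosh (χ w) ^ 2) * (χ' w) ^ 2
          + 6 * Real.cosh (χ w) * Real.sinh (χ w) * χ'' w
          + 2 * w * (4 * Real.sinh (χ w) * Real.cosh (χ w) * (χ' w) ^ 3
            + 3 * (Real.sinh (χ w) ^ 2 + Real.cosh (χ w) ^ 2) * χ' w * χ'' w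
            + Real.cosh (χ w) * Real.sinh (χ w) * χ''' w)) w := by
      have h := ((((hc w hw).const_mul 4).fun_mul (hs w hw)).fun_mul (hχ' w hw)).fun_add
        (((hasDerivAt_id w).const_mul 2).fun_mul
          (((((hs w hw).fun_pow 2).fun_add ((hc w hw).fun_pow 2)).fun_mul ((hχ' w hw).fun_pow 2)).fun_add
            (((hc w hw).fun_mul (hs w hw)).fun_mul (hχ'' w hw))))
      refine h.congr_deriv ?_
      simp only [id_eq]
      push_cast
      ring
    have heq : (fun t => 4 * Real.cosh (χ t) * Real.sinh (χ t) * χ' t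
          + 2 * t * ((Real.sinh (χ t) ^ 2 + Real.cosh (χ t) ^ 2) * (χ' t) ^ 2
            + Real.cosh (χ t) * Real.sinh (χ t) * χ'' t))
        =ᶠ[nhds w] (fun _ => 0) := by
      filter_upwards [hIoo.mem_nhds hw] with t ht using key2 t ht
    have hG : HasDerivAt
        (fun t => 4 * Real.cosh (χ t) * Real.sinh (χ t) * χ' t
          + 2 * t * ((Real.sinh (χ t) ^ 2 + Real.cosh (χ t) ^ 2) * (χ' t) ^ 2
            + Real.cosh (χ t) * Real.sinh (χ t) * χ'' t))
        0 w := (hasDerivAt_const w 0).congr_of_eventuallyEq heq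
    exact hF.unique hG
  -- now the pointwise algebra
  intro v hv
  have Q1 := key0 v hv
  have Q2 : Real.sinh (χ v) ^ 2 = Real.cosh (χ v) ^ 2 - 1 := Real.sinh_sq (χ v)
  have P1 := key1 v hv
  have P2 := key2 v hv
  have P3 := key3 v hv
  set c := Real.cosh (χ v) with hcdef
  set s := Real.sinh (χ v) with hsdef
  set a := χ' v with hadef
  set b := χ'' v with hbdef
  set d := χ''' v with hddef
  obtain ⟨hv1, hv2⟩ := hv
  have hcpos : 0 < c := by rw [hcdef]; exact Real.cosh_pos (χ v)
  have hspos : 0 < s := by rw [hsdef]; exact Real.sinh_pos_iff.mpr (hχpos v ⟨hv1, hv2⟩)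
  have hvne : v ≠ 0 := ne_of_lt hv2
  have hvN : (0:ℝ) < v + N := by linarith
  have hE1 : c + 2 * v * s * a = 0 := by
    have h := mul_left_cancel₀ hcpos.ne'
      (show c * (c + 2 * v * s * a) = c * 0 by linear_combination P1)
    exact h
  have ha : a ≠ 0 := by
    intro h0
    rw [h0] at hE1
    simp at hE1
    exact absurd hE1 hcpos.ne'
  have hcval : c = -(2 * v * s * a) := by linarith [hE1]
  rw [hcval] at P2 P3 Q1 Q2
  -- a² in closed form (polynomial version)
  have ha2' : 4 * v ^ 2 * (v + N) * a ^ 2 = N := by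
    linear_combination (4 * v ^ 2 * a ^ 2 - 1) * Q1 + 4 * v ^ 3 * a ^ 2 * Q2
  have hs2ne : s ^ 2 ≠ 0 := pow_ne_zero 2 hspos.ne'
  -- second derivative relation with c eliminated
  have h2vs : 2 * v * s ^ 2 ≠ 0 := mul_ne_zero (mul_ne_zero two_ne_zero hvne) hs2ne
  have hb' : 2 * v * a * b = 4 * v ^ 2 * a ^ 4 - 3 * a ^ 2 := by
    have h := mul_left_cancel₀ h2vs
      (show 2 * v * s ^ 2 * (2 * v * a * b) = 2 * v * s ^ 2 * (4 * v ^ 2 * a ^ 4 - 3 * a ^ 2) by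
        linear_combination (-(1:ℝ)) * P2)
    exact h
  -- third derivative relation with c eliminated
  have hd0 : 4 * v ^ 2 * (a * d) =
      6 * a ^ 2 + 8 * v ^ 2 * a ^ 4 - 6 * v * (a * b) + 24 * v ^ 3 * a ^ 3 * b := by
    have h := mul_left_cancel₀ hs2ne
      (show s ^ 2 * (4 * v ^ 2 * (a * d)) =
          s ^ 2 * (6 * a ^ 2 + 8 * v ^ 2 * a ^ 4 - 6 * v * (a * b) + 24 * v ^ 3 * a ^ 3 * b) by
        linear_combination (-(1:ℝ)) * P3)
    exact h
  have hden1 : (2 : ℝ) * v * (v + N) ≠ 0 :=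
    mul_ne_zero (mul_ne_zero two_ne_zero hvne) hvN.ne'
  have hden2 : (4 : ℝ) * v ^ 2 * (v + N) ^ 2 ≠ 0 :=
    mul_ne_zero (mul_ne_zero four_ne_zero (pow_ne_zero 2 hvne)) (pow_ne_zero 2 hvN.ne')
  have hba : b / a = -(3 * v + 2 * N) / (2 * v * (v + N)) := by
    rw [div_eq_div_iff ha hden1]
    refine mul_left_cancel₀ ha ?_
    linear_combination (v + N) * hb' + a ^ 2 * ha2'
  have hda : d / a = (15 * v ^ 2 + 20 * N * v + 8 * N ^ 2) / (4 * v ^ 2 * (v + N) ^ 2) := by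
    rw [div_eq_div_iff ha hden2]
    refine mul_left_cancel₀ ha ?_
    linear_combination (v + N) ^ 2 * hd0
      + (12 * v ^ 2 * (v + N) ^ 2 * a ^ 2 - 3 * (v + N) ^ 2) * hb'
      + (12 * v ^ 2 * (v + N) * a ^ 4 + (3 * N - 10 * (v + N)) * a ^ 2) * ha2'
  have ha2 : a ^ 2 = N / (4 * v ^ 2 * (v + N)) := by
    rw [eq_div_iff (mul_ne_zero (mul_ne_zero four_ne_zero (pow_ne_zero 2 hvne)) hvN.ne')]
    linear_combination ha2'
  refine ⟨ha, ?_⟩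
  rw [hda, hba, ha2]
  field_simp
  ring
end

section
/- Oscillator–inverse-square transformation. Let n ≥ 1 be an integer and set m := 2n + 1. Let I : (0, ∞) → ℝ be the function I(z) := ∫₀^z exp(t²) dt (so I(z) > 0 and I'(z) = exp(z²) for z > 0), and define χ(z) := I(z)^{1/m} for z > 0. Then χ is three times differentiable with χ'(z) > 0, and for all z > 0: −(1/2)·{χ, z} + (n(n+1)/χ(z)²)·χ'(z)² = z² − 1. (This realizes the functional relation x^{2n+1} = ∫^z e^{z²} dz of §6 transforming the finite-gap potential φ(x) = n(n+1)·x⁻² with λ = 0 into the harmonic oscillator Y'' = (z² − 2μ − 1)Y with μ = 0.) -/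
/-- The transformation `x^(2n+1) = ∫₀^z e^(t²) dt`: with `m = 2n+1`,
`I(z) = ∫₀^z e^(t²) dt` and `χ(z) = I(z)^(1/m)`, the function `χ` is three times
differentiable with `χ' > 0` on `(0,∞)` and
`-(1/2){χ,z} + (n(n+1)/χ²)χ'² = z² - 1`, transforming the finite-gap potential
`n(n+1)x⁻²` (at `λ = 0`) into the harmonic oscillator (at `μ = 0`). -/
theorem oscillator_inverse_square
    (n : ℕ) (hn : 1 ≤ n)
    (hIpos : ∀ z : ℝ, 0 < z → 0 < ∫ t in (0:ℝ)..z, Real.exp (t ^ 2))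
    (hIderiv : ∀ z : ℝ, 0 < z →
      HasDerivAt (fun w => ∫ t in (0:ℝ)..w, Real.exp (t ^ 2)) (Real.exp (z ^ 2)) z) :
    ∃ χ' χ'' χ''' : ℝ → ℝ,
      (∀ z : ℝ, 0 < z →
        HasDerivAt (fun w => (∫ t in (0:ℝ)..w, Real.exp (t ^ 2)) ^
          ((1 : ℝ) / (2 * n + 1))) (χ' z) z) ∧
      (∀ z : ℝ, 0 < z → HasDerivAt χ' (χ'' z) z) ∧
      (∀ z : ℝ, 0 < z → HasDerivAt χ'' (χ''' z) z) ∧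
      (∀ z : ℝ, 0 < z → 0 < χ' z) ∧
      (∀ z : ℝ, 0 < z →
        -(1/2) * (χ''' z / χ' z - (3/2) * (χ'' z / χ' z) ^ 2)
          + ((n * (n + 1) : ℝ) /
              ((∫ t in (0:ℝ)..z, Real.exp (t ^ 2)) ^ ((1 : ℝ) / (2 * n + 1))) ^ 2)
            * (χ' z) ^ 2
          = z ^ 2 - 1) := by
  set I : ℝ → ℝ := fun w => ∫ t in (0:ℝ)..w, Real.exp (t ^ 2) with hIdef
  set a : ℝ := (1 : ℝ) / (2 * n + 1) with ha
  set E : ℝ → ℝ := fun z => Real.exp (z ^ 2) with hEdef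
  have hEpos : ∀ z : ℝ, 0 < E z := fun z => Real.exp_pos _
  have hE : ∀ z : ℝ, HasDerivAt E (2 * z * E z) z := by
    intro z
    have h1 : HasDerivAt (fun w : ℝ => w ^ 2) (2 * z) z := by
      simpa using hasDerivAt_pow 2 z
    refine ((Real.hasDerivAt_exp (z ^ 2)).comp z h1).congr_deriv ?_
    ring
  refine ⟨fun z => a * I z ^ (a - 1) * E z,
    fun z => a * (a - 1) * I z ^ (a - 2) * E z ^ 2 + a * I z ^ (a - 1) * (2 * z * E z),
    fun z => a * (a - 1) * (a - 2) * I z ^ (a - 3) * E z ^ 3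
      + a * (a - 1) * (6 * z) * I z ^ (a - 2) * E z ^ 2
      + a * I z ^ (a - 1) * ((2 + 4 * z ^ 2) * E z),
    ?_, ?_, ?_, ?_, ?_⟩
  · intro z hz
    have h := (hIderiv z hz).rpow_const (p := a) (Or.inl (hIpos z hz).ne')
    convert h using 1
    ring
  · intro z hz
    have hI' := hIderiv z hz
    have hne := (hIpos z hz).ne'
    have h1 : HasDerivAt (fun w => a * I w ^ (a - 1))
        (a * ((a - 1) * I z ^ (a - 2) * E z)) z := by
      have h := (hI'.rpow_const (p := a - 1) (Or.inl hne)).const_mul a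
      refine h.congr_deriv ?_
      rw [show a - 1 - 1 = a - 2 by ring]
      ring
    have h := h1.mul (hE z)
    refine h.congr_deriv ?_
    ring
  · intro z hz
    have hI' := hIderiv z hz
    have hne := (hIpos z hz).ne'
    have hE' := hE z
    have h1 : HasDerivAt (fun w => a * (a - 1) * I w ^ (a - 2))
        (a * (a - 1) * ((a - 2) * I z ^ (a - 3) * E z)) z := by
      have h := (hI'.rpow_const (p := a - 2) (Or.inl hne)).const_mul (a * (a - 1))
      refine h.congr_deriv ?_
      rw [show a - 2 - 1 = a - 3 by ring]
      ring
    have h2 : HasDerivAt (fun w => E w ^ 2) (2 * E z * (2 * z * E z)) z := by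
      have h := hE'.pow 2
      refine h.congr_deriv ?_
      ring
    have h3 : HasDerivAt (fun w => a * I w ^ (a - 1))
        (a * ((a - 1) * I z ^ (a - 2) * E z)) z := by
      have h := (hI'.rpow_const (p := a - 1) (Or.inl hne)).const_mul a
      refine h.congr_deriv ?_
      rw [show a - 1 - 1 = a - 2 by ring]
      ring
    have h4 : HasDerivAt (fun w : ℝ => 2 * w * E w)
        (2 * E z + 2 * z * (2 * z * E z)) z := by
      have h := ((hasDerivAt_id z).const_mul 2).mul hE'
      simp only [id_eq] at h
      refine h.congr_deriv ?_
      ring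
    have h := (h1.mul h2).add (h3.mul h4)
    refine h.congr_deriv ?_
    ring
  · intro z hz
    have ha0 : 0 < a := by rw [ha]; positivity
    have h1 := Real.rpow_pos_of_pos (hIpos z hz) (a - 1)
    have h2 := hEpos z
    positivity
  · intro z hz
    have hIp := hIpos z hz
    have hne : I z ≠ 0 := hIp.ne'
    have hEz : (0:ℝ) < E z := hEpos z
    have hP : 0 < I z ^ (a - 1) := Real.rpow_pos_of_pos hIp _
    have e2 : I z ^ (a - 2) = I z ^ (a - 1) / I z := by
      rw [show a - 2 = (a - 1) - 1 by ring, Real.rpow_sub hIp, Real.rpow_one]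
    have e3 : I z ^ (a - 3) = I z ^ (a - 1) / I z ^ (2 : ℕ) := by
      have h2 : I z ^ ((2:ℝ)) = I z ^ (2:ℕ) := by
        rw [← Real.rpow_natCast]; norm_num
      rw [show a - 3 = (a - 1) - 2 by ring, Real.rpow_sub hIp, h2]
    have e0 : I z ^ a = I z ^ (a - 1) * I z := by
      have h := Real.rpow_add_one hne (a - 1)
      rw [show a - 1 + 1 = a by ring] at h
      exact h
    have hm : (2 * (n:ℝ) + 1) ≠ 0 := by positivity
    have ha0 : (0:ℝ) < a := by rw [ha]; positivity
    set u : ℝ := E z / I z with hu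
    have h2' : (a * (a - 1) * I z ^ (a - 2) * E z ^ 2
          + a * I z ^ (a - 1) * (2 * z * E z)) / (a * I z ^ (a - 1) * E z)
        = (a - 1) * u + 2 * z := by
      rw [e2, hu]
      have hP' := hP.ne'
      field_simp
    have h1' : (a * (a - 1) * (a - 2) * I z ^ (a - 3) * E z ^ 3
          + a * (a - 1) * (6 * z) * I z ^ (a - 2) * E z ^ 2
          + a * I z ^ (a - 1) * ((2 + 4 * z ^ 2) * E z)) / (a * I z ^ (a - 1) * E z)
        = (a - 1) * (a - 2) * u ^ 2 + 6 * z * (a - 1) * u + 2 + 4 * z ^ 2 := by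
      rw [e2, e3, hu]
      have hP' := hP.ne'
      field_simp
      ring
    have h3' : ((n : ℝ) * (n + 1)) / (I z ^ a) ^ 2 * (a * I z ^ (a - 1) * E z) ^ 2
        = (n : ℝ) * (n + 1) * a ^ 2 * u ^ 2 := by
      rw [e0, hu]
      have hP' := hP.ne'
      field_simp
    have key : (n : ℝ) * (n + 1) * a ^ 2 = (1 - a ^ 2) / 4 := by
      rw [ha]
      field_simp
      ring
    simp only [show intervalIntegral E 0 z MeasureTheory.volume = I z from rfl, h1', h2', h3']
    linear_combination u ^ 2 * key
end

section
/- Rawson's transformation of Riccati's equation. Let a, a₁ ∈ ℝ with a ≠ 0 and a₁ ≠ 0, let φ : ℝ → ℝ, let y₁ : ℝ → ℝ be differentiable with y₁'(s) + a₁·y₁(s)² = φ(s) for all s ∈ ℝ, and let P : ℝ → ℝ be three times differentiable with P'(x) ≠ 0 for all x. Define y : ℝ → ℝ by the relation 2a₁·P'(x)²·y₁(P(x)) = 2a·y(x)·P'(x) + P''(x), i.e. y(x) = (a₁/a)·P'(x)·y₁(P(x)) − P''(x)/(2a·P'(x)). Then y is differentiable and satisfies y'(x) + a·y(x)² = (a₁/a)·φ(P(x))·P'(x)²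 + (3/(4a))·(P''(x)/P'(x))² − (1/(2a))·P'''(x)/P'(x) for all x ∈ ℝ (equations (1)–(4) of Rawson's note, reproduced in Appendix A). -/
/-- Rawson's transformation of Riccati's equation: if `y₁' + a₁y₁² = φ` and
`y = (a₁/a)·P'·y₁(P) - P''/(2aP')`, then
`y' + ay² = (a₁/a)·φ(P)·P'² + (3/(4a))·(P''/P')² - (1/(2a))·P'''/P'`. -/
theorem rawson_riccati_transformation
    (a a₁ : ℝ) (ha : a ≠ 0) (ha₁ : a₁ ≠ 0)
    (φ y₁ y₁' : ℝ → ℝ)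
    (hy₁ : ∀ s, HasDerivAt y₁ (y₁' s) s)
    (heq₁ : ∀ s, y₁' s + a₁ * y₁ s ^ 2 = φ s)
    (P P' P'' P''' : ℝ → ℝ)
    (hP : ∀ x, HasDerivAt P (P' x) x)
    (hP' : ∀ x, HasDerivAt P' (P'' x) x)
    (hP'' : ∀ x, HasDerivAt P'' (P''' x) x)
    (hP'ne : ∀ x, P' x ≠ 0) :
    ∃ y' : ℝ → ℝ,
      (∀ x, HasDerivAt
        (fun w => (a₁ / a) * P' w * y₁ (P w) - P'' w / (2 * a * P' w)) (y' x) x) ∧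
      (∀ x, y' x +
          a * ((a₁ / a) * P' x * y₁ (P x) - P'' x / (2 * a * P' x)) ^ 2
        = (a₁ / a) * φ (P x) * (P' x) ^ 2
          + (3 / (4 * a)) * (P'' x / P' x) ^ 2
          - (1 / (2 * a)) * (P''' x / P' x)) := by
  refine ⟨fun x => (a₁ / a) * P'' x * y₁ (P x) + (a₁ / a) * P' x * (y₁' (P x) * P' x)
      - (P''' x * (2 * a * P' x) - P'' x * (2 * a * P'' x)) / (2 * a * P' x) ^ 2,
    fun x => ?_, fun x => ?_⟩
  · have h1 : HasDerivAt (fun w => (a₁ / a) * P' w * y₁ (P w))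
        ((a₁ / a) * P'' x * y₁ (P x) + (a₁ / a) * P' x * (y₁' (P x) * P' x)) x := by
      have := (((hP' x).const_mul (a₁ / a)).mul ((hy₁ (P x)).comp x (hP x)))
      exact this
    have h2 : HasDerivAt (fun w => P'' w / (2 * a * P' w))
        ((P''' x * (2 * a * P' x) - P'' x * (2 * a * P'' x)) / (2 * a * P' x) ^ 2) x := by
      exact (hP'' x).div ((hP' x).const_mul (2 * a)) (by
        simp [hP'ne x, ha])
    exact h1.sub h2
  · have hφ : y₁' (P x) = φ (P x) - a₁ * y₁ (P x) ^ 2 := by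
      have := heq₁ (P x); linarith
    have hne := hP'ne x
    simp only [hφ]
    field_simp
    ring
end
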